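/- Let T be a directed tree graphical model on a finite rooted tree. For every subset Y ⊆ V of observed vertices with assignment y, the root value computed by the leaf-to-root message-passing recursion equals the marginal probability ∑ T(x), the sum ranging over all total assignments x whose restriction to Y equals y. -/
import Mathlib


attribute [local instance] Classical.propDecidable

noncomputable section

/-- Indicator variable `[v]_k` relative to a partial assignment `y`
(`y v = none` means `v` is unobserved). -/
def Indicator {Var : Type} (y : Var → Option ℕ) (v : Var) (k : ℕ) : ℝ :=
  match y v with
  | none => 1
  | some i => if i = k then 1 else 0

/-- A directed tree graphical model on a finite rooted tree: `par v` is the parent of `v`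
(`none` exactly at the root), acyclicity/orientation is encoded by the strictly
increasing `rank` towards the root, each vertex `v` carries a variable with domain
`{0, …, dom v - 1}`, `Proot` is the distribution at the root and `Pcond t k j` the
conditional table `P_{par t, t}(k | j)`. -/
structure TreeGM where
  V : Type
  fintypeV : Fintype V
  decEqV : DecidableEq V
  root : V
  par : V → Option V
  par_root : par root = none
  par_of_ne_root : ∀ v, v ≠ root → par v ≠ none
  rank : V → ℕ
  rank_lt : ∀ t s, par t = some s → rank t < rank s
  dom : V → ℕ
  dom_pos : ∀ v, 0 < dom v
  Proot : ℕ → ℝ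
  Pcond : V → ℕ → ℕ → ℝ

attribute [instance] TreeGM.fintypeV TreeGM.decEqV

namespace TreeGM

/-- The parameters of the tree model are probability distributions. -/
structure IsProb (T : TreeGM) : Prop where
  root_nonneg : ∀ k, 0 ≤ T.Proot k
  root_sum : ∑ k ∈ Finset.range (T.dom T.root), T.Proot k = 1
  cond_nonneg : ∀ t k j, 0 ≤ T.Pcond t k j
  cond_sum : ∀ t s, T.par t = some s → ∀ j < T.dom s,
    ∑ k ∈ Finset.range (T.dom t), T.Pcond t k j = 1

/-- The children of a vertex. -/
def children (T : TreeGM) (t : T.V) : Finset T.V :=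
  Finset.univ.filter fun q => T.par q = some t

/-- The value `T(x)` of a total assignment `x`. -/
def val (T : TreeGM) (x : ∀ v, Fin (T.dom v)) : ℝ :=
  T.Proot (x T.root) *
    ∏ t : T.V,
      match T.par t with
      | some s => T.Pcond t (x t) (x s)
      | none => 1

/-- Sum-product message passing with fuel (never exhausted thanks to `rank_lt`):
`msgAux T y n t j` is the message `μ_{t→par t; j}` under partial assignment `y`. -/
def msgAux (T : TreeGM) (y : T.V → Option ℕ) : ℕ → T.V → ℕ → ℝ
  | 0, _, _ => 1
  | n + 1, t, j =>
    ∑ k ∈ Finset.range (T.dom t),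
      (match T.par t with
        | some _ => T.Pcond t k j
        | none => T.Proot k) *
        Indicator y t k *
        ∏ q ∈ T.children t, msgAux T y n q k

/-- The value computed at the root by leaf-to-root sum-product message passing. -/
def rootValue (T : TreeGM) (y : T.V → Option ℕ) : ℝ :=
  T.msgAux y (T.rank T.root + 1) T.root 0

/-- Max-product message passing: every sum over the domain is replaced by a maximum. -/
def maxMsgAux (T : TreeGM) (y : T.V → Option ℕ) : ℕ → T.V → ℕ → ℝ
  | 0, _, _ => 1
  | n + 1, t, j =>
    (Finset.range (T.dom t)).sup'
      (Finset.nonempty_range_iff.mpr (T.dom_pos t).ne') fun k =>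
      (match T.par t with
        | some _ => T.Pcond t k j
        | none => T.Proot k) *
        Indicator y t k *
        ∏ q ∈ T.children t, maxMsgAux T y n q k

/-- The value computed at the root by leaf-to-root max-product message passing. -/
def maxRootValue (T : TreeGM) (y : T.V → Option ℕ) : ℝ :=
  T.maxMsgAux y (T.rank T.root + 1) T.root 0

end TreeGM


namespace TreeGM

lemma mem_children_iff (T : TreeGM) {q t : T.V} : q ∈ T.children t ↔ T.par q = some t := by
  simp [children]

lemma rank_lt_of_mem_children (T : TreeGM) {q t : T.V} (h : q ∈ T.children t) :
    T.rank q < T.rank t :=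
  T.rank_lt q t (T.mem_children_iff.mp h)

/-- The subtree (set of descendants, including itself) of a vertex. -/
def sub (T : TreeGM) (t : T.V) : Finset T.V :=
  insert t ((T.children t).attach.biUnion fun q => T.sub q.1)
termination_by T.rank t
decreasing_by exact T.rank_lt_of_mem_children q.2

lemma mem_sub_iff (T : TreeGM) {t v : T.V} :
    v ∈ T.sub t ↔ v = t ∨ ∃ q ∈ T.children t, v ∈ T.sub q := by
  conv_lhs => rw [sub]
  simp [Finset.mem_biUnion, Subtype.exists]

lemma self_mem_sub (T : TreeGM) (t : T.V) : t ∈ T.sub t :=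
  T.mem_sub_iff.mpr (Or.inl rfl)

lemma mem_sub_of_child (T : TreeGM) {q t v : T.V} (hq : q ∈ T.children t)
    (hv : v ∈ T.sub q) : v ∈ T.sub t :=
  T.mem_sub_iff.mpr (Or.inr ⟨q, hq, hv⟩)

lemma rank_le_of_mem_sub (T : TreeGM) {t v : T.V} (h : v ∈ T.sub t) :
    T.rank v ≤ T.rank t := by
  rcases T.mem_sub_iff.mp h with rfl | ⟨q, hq, hv⟩
  · exact le_refl _
  · exact le_trans (T.rank_le_of_mem_sub hv) (le_of_lt (T.rank_lt_of_mem_children hq))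
termination_by T.rank t
decreasing_by exact T.rank_lt_of_mem_children hq

lemma rank_lt_of_mem_sub_ne (T : TreeGM) {t v : T.V} (h : v ∈ T.sub t) (hne : v ≠ t) :
    T.rank v < T.rank t := by
  rcases T.mem_sub_iff.mp h with rfl | ⟨q, hq, hv⟩
  · exact absurd rfl hne
  · exact lt_of_le_of_lt (T.rank_le_of_mem_sub hv) (T.rank_lt_of_mem_children hq)

lemma notMem_sub_of_child (T : TreeGM) {q t : T.V} (hq : q ∈ T.children t) :
    t ∉ T.sub q := fun h =>
  absurd (T.rank_le_of_mem_sub h) (not_le.mpr (T.rank_lt_of_mem_children hq))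

lemma parent_mem_sub (T : TreeGM) {t v s : T.V} (hv : v ∈ T.sub t) (hne : v ≠ t)
    (hs : T.par v = some s) : s ∈ T.sub t := by
  rcases T.mem_sub_iff.mp hv with rfl | ⟨q, hq, hvq⟩
  · exact absurd rfl hne
  · by_cases hvq' : v = q
    · subst hvq'
      have : s = t := by
        have := T.mem_children_iff.mp hq
        rw [hs] at this
        exact Option.some.inj this
      rw [this]
      exact T.self_mem_sub t
    · exact T.mem_sub_of_child hq (T.parent_mem_sub hvq hvq' hs)
termination_by T.rank t
decreasing_by exact T.rank_lt_of_mem_children hq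

lemma sub_trans (T : TreeGM) {t s v : T.V} (hv : v ∈ T.sub s) (hs : s ∈ T.sub t) :
    v ∈ T.sub t := by
  rcases T.mem_sub_iff.mp hs with rfl | ⟨q, hq, hsq⟩
  · exact hv
  · exact T.mem_sub_of_child hq (T.sub_trans hv hsq)
termination_by T.rank t
decreasing_by exact T.rank_lt_of_mem_children hq

lemma sub_chain (T : TreeGM) {v a b : T.V} (ha : v ∈ T.sub a) (hb : v ∈ T.sub b) :
    a ∈ T.sub b ∨ b ∈ T.sub a := by
  rcases T.mem_sub_iff.mp ha with rfl | ⟨q, hq, hvq⟩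
  · exact Or.inl hb
  · rcases T.sub_chain hvq hb with h | h
    · by_cases hqb : q = b
      · subst hqb
        exact Or.inr (T.mem_sub_of_child hq (T.self_mem_sub q))
      · exact Or.inl (T.parent_mem_sub h hqb (T.mem_children_iff.mp hq))
    · exact Or.inr (T.mem_sub_of_child hq h)
termination_by T.rank a
decreasing_by exact T.rank_lt_of_mem_children hq

lemma disjoint_sub (T : TreeGM) {t q q' : T.V} (hq : q ∈ T.children t)
    (hq' : q' ∈ T.children t) (hne : q ≠ q') : Disjoint (T.sub q) (T.sub q') := by
  rw [Finset.disjoint_left]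
  intro v hv hv'
  rcases T.sub_chain hv hv' with h | h
  · have ht : t ∈ T.sub q' := T.parent_mem_sub h hne (T.mem_children_iff.mp hq)
    exact absurd (T.rank_le_of_mem_sub ht) (not_le.mpr (T.rank_lt_of_mem_children hq'))
  · have ht : t ∈ T.sub q := T.parent_mem_sub h (Ne.symm hne) (T.mem_children_iff.mp hq')
    exact absurd (T.rank_le_of_mem_sub ht) (not_le.mpr (T.rank_lt_of_mem_children hq))

lemma mem_sub_root (T : TreeGM) (v : T.V) : v ∈ T.sub T.root := by
  by_cases h : v = T.root
  · subst h; exact T.self_mem_sub _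
  · cases hp : T.par v with
    | none => exact absurd hp (T.par_of_ne_root v h)
    | some s =>
      have hlt : (Finset.univ.filter fun w => T.rank s < T.rank w).card <
          (Finset.univ.filter fun w => T.rank v < T.rank w).card := by
        apply Finset.card_lt_card
        constructor
        · intro w hw
          simp only [Finset.mem_filter, Finset.mem_univ, true_and] at hw ⊢
          exact lt_trans (T.rank_lt v s hp) hw
        · intro hsub
          have hs : s ∈ Finset.univ.filter fun w => T.rank v < T.rank w := by
            simp only [Finset.mem_filter, Finset.mem_univ, true_and]
            exact T.rank_lt v s hp
          have := hsub hs
          simp only [Finset.mem_filter, Finset.mem_univ, true_and] at this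
          exact lt_irrefl _ this
      have hsr : s ∈ T.sub T.root := T.mem_sub_root s
      exact T.sub_trans (T.mem_sub_of_child (T.mem_children_iff.mpr hp) (T.self_mem_sub v)) hsr
termination_by (Finset.univ.filter fun w => T.rank v < T.rank w).card
decreasing_by exact hlt

/-- Partial assignments supported on `S`: in-domain on `S`, zero elsewhere. -/
def piS (T : TreeGM) (S : Finset T.V) : Finset (T.V → ℕ) :=
  Fintype.piFinset fun v => if v ∈ S then Finset.range (T.dom v) else {0}

lemma mem_piS (T : TreeGM) {S : Finset T.V} {x : T.V → ℕ} :
    x ∈ T.piS S ↔ (∀ v ∈ S, x v < T.dom v) ∧ ∀ v ∉ S, x v = 0 := by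
  rw [piS, Fintype.mem_piFinset]
  constructor
  · intro h
    refine ⟨fun v hv => ?_, fun v hv => ?_⟩
    · have := h v; rw [if_pos hv] at this; exact Finset.mem_range.mp this
    · have := h v; rw [if_neg hv] at this; exact Finset.mem_singleton.mp this
  · intro ⟨h1, h2⟩ v
    by_cases hv : v ∈ S
    · rw [if_pos hv]; exact Finset.mem_range.mpr (h1 v hv)
    · rw [if_neg hv]; exact Finset.mem_singleton.mpr (h2 v hv)

/-- The factor of vertex `v` in the subtree sum rooted at `t` with parent value `j`. -/
def factor (T : TreeGM) (y : T.V → Option ℕ) (t : T.V) (j : ℕ) (x : T.V → ℕ)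
    (v : T.V) : ℝ :=
  (if v = t then
    match T.par t with
    | some _ => T.Pcond t (x t) j
    | none => T.Proot (x t)
  else
    match T.par v with
    | some s => T.Pcond v (x v) (x s)
    | none => 1) * Indicator y v (x v)

lemma prod_factor_eq (T : TreeGM) (y : T.V → Option ℕ) {t q : T.V} {k j : ℕ}
    {x z : T.V → ℕ} (hq : q ∈ T.children t) (hxz : ∀ v ∈ T.sub q, x v = z v)
    (hxt : x t = k) :
    ∏ v ∈ T.sub q, T.factor y t j x v = ∏ v ∈ T.sub q, T.factor y q k z v := by
  refine Finset.prod_congr rfl fun v hv => ?_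
  have hvt : v ≠ t := fun h => T.notMem_sub_of_child hq (h ▸ hv)
  unfold factor
  rw [if_neg hvt]
  by_cases hvq : v = q
  · subst hvq
    rw [if_pos rfl]
    have hp : T.par v = some t := T.mem_children_iff.mp hq
    rw [hp]
    show T.Pcond v (x v) (x t) * Indicator y v (x v)
      = T.Pcond v (z v) k * Indicator y v (z v)
    rw [hxz v hv, hxt]
  · rw [if_neg hvq]
    cases hpv : T.par v with
    | none =>
      show (1 : ℝ) * Indicator y v (x v) = 1 * Indicator y v (z v)
      rw [hxz v hv]
    | some s =>
      have hs : s ∈ T.sub q := T.parent_mem_sub hv hvq hpv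
      show T.Pcond v (x v) (x s) * Indicator y v (x v)
        = T.Pcond v (z v) (z s) * Indicator y v (z v)
      rw [hxz v hv, hxz s hs]

lemma pairwise_disjoint_children (T : TreeGM) (t : T.V) :
    (↑(T.children t).attach : Set {x // x ∈ T.children t}).PairwiseDisjoint
      fun q => T.sub q.1 := by
  intro a _ b _ hab
  exact T.disjoint_sub a.2 b.2 fun h => hab (Subtype.ext h)

lemma msg_eq (T : TreeGM) (y : T.V → Option ℕ) :
    ∀ (n : ℕ) (t : T.V) (j : ℕ), T.rank t < n →
      T.msgAux y n t j = ∑ x ∈ T.piS (T.sub t), ∏ v ∈ T.sub t, T.factor y t j x v := by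
  intro n
  induction n with
  | zero => intro t j h; exact absurd h (Nat.not_lt_zero _)
  | succ n ih =>
    intro t j ht
    have hrk : ∀ q ∈ T.children t, T.rank q < n := fun q hq =>
      lt_of_lt_of_le (T.rank_lt_of_mem_children hq) (Nat.lt_succ_iff.mp ht)
    have h1 : ∀ k : ℕ, ∏ q ∈ T.children t, T.msgAux y n q k
        = ∑ p ∈ (T.children t).pi fun q => T.piS (T.sub q),
            ∏ q ∈ (T.children t).attach,
              ∏ v ∈ T.sub q.1, T.factor y q.1 k (p q.1 q.2) v := by
      intro k
      rw [Finset.prod_congr rfl fun q hq => ih q k (hrk q hq)]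
      exact Finset.prod_sum _ _ _
    rw [msgAux]
    simp only [h1, Finset.mul_sum]
    rw [← Finset.sum_product']
    -- the combining map
    set D := T.children t with hD
    set Φ : ℕ × ((a : T.V) → a ∈ D → T.V → ℕ) → T.V → ℕ := fun kp v =>
      if v = t then kp.1
      else ∑ q ∈ D.attach, if v ∈ T.sub q.1 then kp.2 q.1 q.2 v else 0 with hΦ
    have hΦt : ∀ kp, Φ kp t = kp.1 := fun kp => if_pos rfl
    have hΦsub : ∀ kp, (∀ q (hq : q ∈ D), kp.2 q hq ∈ T.piS (T.sub q)) →
        ∀ q (hq : q ∈ D), ∀ v ∈ T.sub q, Φ kp v = kp.2 q hq v := by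
      intro kp hp q hq v hv
      have hvt : v ≠ t := fun h => T.notMem_sub_of_child hq (h ▸ hv)
      show (if v = t then kp.1 else _) = _
      rw [if_neg hvt]
      rw [Finset.sum_eq_single_of_mem ⟨q, hq⟩ (Finset.mem_attach _ _)]
      · rw [if_pos hv]
      · intro b _ hb
        rw [if_neg]
        intro hvb
        exact (Finset.disjoint_left.mp
          (T.disjoint_sub b.2 hq fun h => hb (Subtype.ext h))) hvb hv
    have hΦzero : ∀ kp, (∀ q (hq : q ∈ D), kp.2 q hq ∈ T.piS (T.sub q)) →
        ∀ v, v ∉ T.sub t → Φ kp v = 0 := by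
      intro kp hp v hv
      have hvt : v ≠ t := fun h => hv (h ▸ T.self_mem_sub t)
      show (if v = t then kp.1 else _) = 0
      rw [if_neg hvt]
      apply Finset.sum_eq_zero
      intro b _
      rw [if_neg]
      intro hvb
      exact hv (T.mem_sub_of_child b.2 hvb)
    refine Finset.sum_bij' (fun kp _ => Φ kp)
      (fun x _ => (x t, fun q hq v => if v ∈ T.sub q then x v else 0))
      ?_ ?_ ?_ ?_ ?_
    · -- maps into piS (sub t)
      intro kp hkp
      rw [Finset.mem_product] at hkp
      obtain ⟨hk, hp⟩ := hkp
      have hp' : ∀ q (hq : q ∈ D), kp.2 q hq ∈ T.piS (T.sub q) :=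
        fun q hq => Finset.mem_pi.mp hp q hq
      rw [mem_piS]
      constructor
      · intro v hv
        rcases T.mem_sub_iff.mp hv with rfl | ⟨q, hq, hvq⟩
        · rw [hΦt]; exact Finset.mem_range.mp hk
        · rw [hΦsub kp hp' q hq v hvq]
          exact ((T.mem_piS.mp (hp' q hq)).1 v hvq)
      · exact hΦzero kp hp'
    · -- inverse maps into the product
      intro x hx
      rw [Finset.mem_product]
      rw [mem_piS] at hx
      constructor
      · exact Finset.mem_range.mpr (hx.1 t (T.self_mem_sub t))
      · rw [Finset.mem_pi]
        intro q hq
        rw [mem_piS]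
        constructor
        · intro v hv
          dsimp only
          rw [if_pos hv]
          exact hx.1 v (T.mem_sub_of_child hq hv)
        · intro v hv
          dsimp only
          rw [if_neg hv]
    · -- left inverse
      intro kp hkp
      rw [Finset.mem_product] at hkp
      have hp' : ∀ q (hq : q ∈ D), kp.2 q hq ∈ T.piS (T.sub q) :=
        fun q hq => Finset.mem_pi.mp hkp.2 q hq
      have h1 : Φ kp t = kp.1 := hΦt kp
      refine Prod.ext h1 ?_
      funext q hq v
      dsimp only
      by_cases hv : v ∈ T.sub q
      · rw [if_pos hv, hΦsub kp hp' q hq v hv]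
      · rw [if_neg hv]
        exact ((T.mem_piS.mp (hp' q hq)).2 v hv).symm
    · -- right inverse
      intro x hx
      rw [mem_piS] at hx
      funext v
      by_cases hvt : v = t
      · subst hvt
        exact hΦt _
      · show (if v = t then x t else _) = x v
        rw [if_neg hvt]
        by_cases hv : v ∈ T.sub t
        · rcases T.mem_sub_iff.mp hv with rfl | ⟨q, hq, hvq⟩
          · exact absurd rfl hvt
          · rw [Finset.sum_eq_single_of_mem ⟨q, hq⟩ (Finset.mem_attach _ _)]
            · dsimp only
              rw [if_pos hvq, if_pos hvq]
            · intro b _ hb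
              rw [if_neg]
              intro hvb
              exact (Finset.disjoint_left.mp
                (T.disjoint_sub b.2 hq fun h => hb (Subtype.ext h))) hvb hvq
        · rw [hx.2 v hv]
          apply Finset.sum_eq_zero
          intro b _
          rw [if_neg]
          · intro hvb
            exact hv (T.mem_sub_of_child b.2 hvb)
    · -- values agree
      intro kp hkp
      rw [Finset.mem_product] at hkp
      have hp' : ∀ q (hq : q ∈ D), kp.2 q hq ∈ T.piS (T.sub q) :=
        fun q hq => Finset.mem_pi.mp hkp.2 q hq
      have htnot : t ∉ (D.attach.biUnion fun q => T.sub q.1) := by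
        rw [Finset.mem_biUnion]
        rintro ⟨q, _, hq⟩
        exact T.notMem_sub_of_child q.2 hq
      have hsubt : T.sub t = insert t (D.attach.biUnion fun q => T.sub q.1) := by
        rw [sub]
      rw [hsubt, Finset.prod_insert htnot,
        Finset.prod_biUnion (T.pairwise_disjoint_children t)]
      have hfac : T.factor y t j (Φ kp) t = (match T.par t with
          | some _ => T.Pcond t kp.1 j
          | none => T.Proot kp.1) * Indicator y t kp.1 := by
        unfold factor
        rw [if_pos rfl, hΦt]
      rw [hfac]
      congr 1
      refine Finset.prod_congr rfl fun q _ => ?_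
      exact (T.prod_factor_eq y q.2
        (fun v hv => hΦsub kp hp' q.1 q.2 v hv) (hΦt kp)).symm

lemma prod_indicator (T : TreeGM) (y : T.V → Option ℕ) (z : T.V → ℕ) :
    ∏ v : T.V, Indicator y v (z v) =
      if ∀ v i, y v = some i → z v = i then 1 else 0 := by
  split
  next h =>
    apply Finset.prod_eq_one
    intro v _
    unfold Indicator
    cases hyv : y v with
    | none => rfl
    | some i =>
      show (if i = z v then (1 : ℝ) else 0) = 1
      rw [if_pos (h v i hyv).symm]
  next h =>
    push_neg at h
    obtain ⟨v, i, hyv, hne⟩ := h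
    apply Finset.prod_eq_zero (Finset.mem_univ v)
    unfold Indicator
    rw [hyv]
    show (if i = z v then (1 : ℝ) else 0) = 0
    rw [if_neg fun hh => hne hh.symm]

lemma prod_factor_root (T : TreeGM) (y : T.V → Option ℕ) (z : T.V → ℕ) :
    ∏ v : T.V, T.factor y T.root 0 z v =
      (T.Proot (z T.root) * ∏ v : T.V, (match T.par v with
        | some s => T.Pcond v (z v) (z s)
        | none => (1 : ℝ))) *
      ∏ v : T.V, Indicator y v (z v) := by
  unfold factor
  rw [Finset.prod_mul_distrib]
  congr 1
  rw [← Finset.mul_prod_erase Finset.univ _ (Finset.mem_univ T.root)]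
  conv_rhs => rw [← Finset.mul_prod_erase Finset.univ _ (Finset.mem_univ T.root)]
  rw [if_pos rfl]
  have hroot : (match T.par T.root with
      | some _ => T.Pcond T.root (z T.root) 0
      | none => T.Proot (z T.root)) = T.Proot (z T.root) := by
    rw [T.par_root]
  have hroot1 : (match T.par T.root with
      | some s => T.Pcond T.root (z T.root) (z s)
      | none => (1 : ℝ)) = 1 := by
    rw [T.par_root]
  rw [hroot, hroot1, one_mul]
  congr 1
  refine Finset.prod_congr rfl fun v hv => ?_
  rw [if_neg (Finset.ne_of_mem_erase hv)]

end TreeGM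

/-- Let `T` be a directed tree graphical model on a finite rooted
tree.  For every set of observed vertices with (in-domain) assignment `y`, the root
value computed by the leaf-to-root message-passing recursion equals the marginal
probability `∑ T(x)`, the sum ranging over all total assignments `x` whose restriction
to the observed vertices equals `y`. -/
theorem treegm_message_passing_computes_marginal (T : TreeGM) (hT : T.IsProb)
    (y : T.V → Option ℕ) (hy : ∀ v i, y v = some i → i < T.dom v) :
    T.rootValue y =
      ∑ x ∈ Finset.univ.filter
          (fun x : ∀ v : T.V, Fin (T.dom v) =>
            ∀ (v : T.V) (i : ℕ), y v = some i → (x v : ℕ) = i),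
        T.val x := by
  have hsub : T.sub T.root = Finset.univ :=
    Finset.eq_univ_iff_forall.mpr T.mem_sub_root
  unfold TreeGM.rootValue
  rw [T.msg_eq y _ T.root 0 (Nat.lt_succ_self _), hsub, Finset.sum_filter]
  refine Finset.sum_bij'
    (fun z hz => fun v => (⟨z v, (T.mem_piS.mp hz).1 v (Finset.mem_univ v)⟩ : Fin (T.dom v)))
    (fun x _ => fun v => (x v : ℕ))
    (fun _ _ => Finset.mem_univ _) ?_ ?_ ?_ ?_
  · intro x _
    rw [TreeGM.mem_piS]
    exact ⟨fun v _ => (x v).isLt, fun v hv => absurd (Finset.mem_univ v) hv⟩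
  · intro z hz
    funext v
    rfl
  · intro x hx
    funext v
    rfl
  · intro z hz
    rw [T.prod_factor_root y z, T.prod_indicator y z]
    by_cases hcond : ∀ v i, y v = some i → z v = i
    · rw [if_pos hcond, if_pos (fun v i h => hcond v i h), mul_one]
      rfl
    · rw [if_neg hcond, if_neg (fun h => hcond fun v i hh => h v i hh), mul_zero]
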